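/- Let N ≥ 3, α ∈ (0,N), p = (N+α)/(N−2), q ∈ (2, 2N/(N−2)), and let A and c be the minimization constant (1.5) and the Nehari mountain-pass level respectively. Suppose {vₙ} ⊂ H¹_rad(ℝᴺ) is bounded, vₙ ⇀ 0 in H¹, H(vₙ) = 1 for all n, and C(vₙ) → 0. Then limsup ‖vₙ‖_{2*}² ≥ (2p/C₀)^{1/p}, and consequently ½ lim ‖∇vₙ‖₂² ≥ ½ S (2p/C₀)^{1/p}. -/

import Mathlib

open MeasureTheory

/-- Membership in `H¹(ℝᴺ)` for a plain function. -/
def MemH1 {N : ℕ} (u : EuclideanSpace ℝ (Fin N) → ℝ) : Prop :=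
  MemLp u 2 volume ∧ Differentiable ℝ u ∧ MemLp (fun x => gradient u x) 2 volume

/-- The normalization constant `C̄` of the Riesz potential `I_α`. -/
noncomputable def rieszConst (N : ℕ) (α : ℝ) : ℝ :=
  Real.Gamma (((N:ℝ) - α) / 2) / (Real.Gamma (α / 2) * Real.pi ^ ((N:ℝ) / 2) * 2 ^ α)

/-- The Dirichlet energy `A(u) = ∫ |∇u|²`. -/
noncomputable def dirichlet {N : ℕ} (u : EuclideanSpace ℝ (Fin N) → ℝ) : ℝ :=
  ∫ x : EuclideanSpace ℝ (Fin N), ‖gradient u x‖ ^ (2:ℕ)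

/-- `D(u) = ∫ |u|²`. -/
noncomputable def l2sq {N : ℕ} (u : EuclideanSpace ℝ (Fin N) → ℝ) : ℝ :=
  ∫ x : EuclideanSpace ℝ (Fin N), |u x| ^ (2:ℕ)

/-- The nonlocal term `B(u) = ∫ (I_α * |u|^p) |u|^p`. -/
noncomputable def nonlocalB (N : ℕ) (α p : ℝ) (u : EuclideanSpace ℝ (Fin N) → ℝ) : ℝ :=
  ∫ x : EuclideanSpace ℝ (Fin N), ∫ y : EuclideanSpace ℝ (Fin N),
    rieszConst N α * |u x| ^ p * |u y| ^ p * ‖x - y‖ ^ (α - (N:ℝ))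

/-- `C(u) = ∫ |u|^q`. -/
noncomputable def lqq {N : ℕ} (q : ℝ) (u : EuclideanSpace ℝ (Fin N) → ℝ) : ℝ :=
  ∫ x : EuclideanSpace ℝ (Fin N), |u x| ^ q

/-- Membership in the Nehari manifold `𝒩`. -/
def InNehari (N : ℕ) (α p q : ℝ) (u : EuclideanSpace ℝ (Fin N) → ℝ) : Prop :=
  MemH1 u ∧ ¬ (u =ᵐ[volume] (0 : EuclideanSpace ℝ (Fin N) → ℝ)) ∧
    dirichlet u + l2sq u = nonlocalB N α p u + lqq q u

/-- The energy functional `I`. -/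
noncomputable def energy (N : ℕ) (α p q : ℝ) (u : EuclideanSpace ℝ (Fin N) → ℝ) : ℝ :=
  (1 / 2) * (dirichlet u + l2sq u) - (1 / (2 * p)) * nonlocalB N α p u -
    (1 / q) * lqq q u

/-- The constraint functional `H(u) = (1/2p)B(u) + (1/q)C(u) − ½‖u‖₂²`. -/
noncomputable def constraintH (N : ℕ) (α p q : ℝ)
    (u : EuclideanSpace ℝ (Fin N) → ℝ) : ℝ :=
  (1 / (2 * p)) * nonlocalB N α p u + (1 / q) * lqq q u - (1 / 2) * l2sq u

/-- `‖u‖_{2*}²` where `2* = 2N/(N−2)`. -/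
noncomputable def l2starSq (N : ℕ) (u : EuclideanSpace ℝ (Fin N) → ℝ) : ℝ :=
  (∫ x : EuclideanSpace ℝ (Fin N), |u x| ^ (2 * (N:ℝ) / ((N:ℝ) - 2))) ^
    (((N:ℝ) - 2) / (N:ℝ))

/-!
On the constraint `H(vₙ) = 1` the nonlocal term satisfies `B(vₙ) ≥ 2p (1 - C(vₙ)/q)`, so the
sharp HLS bound forces `‖vₙ‖_{2*}^{2p} ≥ (2p/C₀)(1 - C(vₙ)/q) → 2p/C₀`. Taking `p`-th roots
gives the first estimate, and the Sobolev inequality transfers it to `‖∇vₙ‖₂²`.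
-/

open Filter Topology

theorem Filter.le_limsup_of_tendsto_of_eventually_le {ι α : Type*}
    [ConditionallyCompleteLinearOrder α] [TopologicalSpace α] [OrderTopology α]
    {f : Filter ι} [f.NeBot] {u w : ι → α} {a : α} (hw : Tendsto w f (𝓝 a))
    (hwu : ∀ᶠ i in f, w i ≤ u i) (hu : f.IsBoundedUnder (· ≤ ·) u) : a ≤ limsup u f :=
  hw.limsup_eq ▸ limsup_le_limsup hwu hw.isCoboundedUnder_le hu

section Functionals

variable {N : ℕ}

theorem l2sq_nonneg (u : EuclideanSpace ℝ (Fin N) → ℝ) : 0 ≤ l2sq u :=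
  integral_nonneg fun _ => by positivity

theorem l2starSq_nonneg (u : EuclideanSpace ℝ (Fin N) → ℝ) : 0 ≤ l2starSq N u :=
  Real.rpow_nonneg (integral_nonneg fun _ => by positivity) _

theorem le_l2starSq_rpow_of_constraintH_eq_one {α p q C₀ : ℝ}
    {u : EuclideanSpace ℝ (Fin N) → ℝ}
    (hp : 0 < p) (hC₀ : 0 < C₀) (hHLS : nonlocalB N α p u ≤ C₀ * l2starSq N u ^ p)
    (hH : constraintH N α p q u = 1) :
    2 * p / C₀ * (1 - lqq q u / q) ≤ l2starSq N u ^ p := by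
  have hB : 2 * p * (1 - lqq q u / q) ≤ nonlocalB N α p u := by
    have := mul_nonneg hp.le (l2sq_nonneg u)
    unfold constraintH at hH
    field_simp at hH
    rw [mul_sub, mul_one, ← mul_div_assoc]
    linarith
  rw [div_mul_eq_mul_div, div_le_iff₀ hC₀]
  linarith

end Functionals

open Filter in
theorem stmt_19_general (N : ℕ) (hN : 3 ≤ N) (α : ℝ) (hα : α ∈ Set.Ioo (0:ℝ) N)
    (p : ℝ) (hp : p = ((N:ℝ) + α) / ((N:ℝ) - 2))
    (q : ℝ)
    (C₀ S : ℝ) (hC₀ : 0 < C₀) (hS : 0 < S)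
    -- `C₀` is the sharp Hardy–Littlewood–Sobolev constant: `B(v) ≤ C₀‖v‖_{2*}^{2p}`
    (hHLS : ∀ v : EuclideanSpace ℝ (Fin N) → ℝ, MemH1 v →
      nonlocalB N α p v ≤ C₀ * l2starSq N v ^ p)
    -- `S` is the best Sobolev constant: `S‖v‖_{2*}² ≤ ‖∇v‖₂²`
    (hSob : ∀ v : EuclideanSpace ℝ (Fin N) → ℝ, MemH1 v →
      S * l2starSq N v ≤ dirichlet v)
    (v : ℕ → EuclideanSpace ℝ (Fin N) → ℝ)
    (hmem : ∀ n, MemH1 (v n))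
    -- boundedness in `H¹`
    (hbdd : ∃ M : ℝ, ∀ n, dirichlet (v n) + l2sq (v n) ≤ M)
    (hconstr : ∀ n, constraintH N α p q (v n) = 1)
    (hCq : Tendsto (fun n => lqq q (v n)) atTop (nhds 0)) :
    (2 * p / C₀) ^ (1 / p) ≤ limsup (fun n => l2starSq N (v n)) atTop ∧
      (1 / 2) * S * (2 * p / C₀) ^ (1 / p) ≤
        (1 / 2) * limsup (fun n => dirichlet (v n)) atTop := by
  have hp0 : 0 < p := by
    have : (3:ℝ) ≤ N := by exact_mod_cast hN
    rw [hp]; exact div_pos (by linarith [hα.1]) (by linarith)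
  set r : ℕ → ℝ := fun n => 2 * p / C₀ * (1 - lqq q (v n) / q)
  have hr : Tendsto r atTop (𝓝 (2 * p / C₀)) := by
    simpa using (hCq.div_const q).const_sub 1 |>.const_mul (2 * p / C₀)
  have hroot : Tendsto (fun n => r n ^ (1 / p)) atTop (𝓝 ((2 * p / C₀) ^ (1 / p))) :=
    hr.rpow_const (Or.inr (by positivity))
  have hle : ∀ᶠ n in atTop, r n ^ (1 / p) ≤ l2starSq N (v n) := by
    filter_upwards [hr.eventually (lt_mem_nhds (by positivity))] with n hn
    rw [one_div, Real.rpow_inv_le_iff_of_pos hn.le (l2starSq_nonneg _) hp0]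
    exact le_l2starSq_rpow_of_constraintH_eq_one hp0 hC₀ (hHLS _ (hmem n)) (hconstr n)
  obtain ⟨M, hM⟩ := hbdd
  have hD : ∀ n, dirichlet (v n) ≤ M := fun n => by linarith [hM n, l2sq_nonneg (v n)]
  have hL : ∀ n, l2starSq N (v n) ≤ M / S := fun n => by
    rw [le_div_iff₀' hS]; exact (hSob _ (hmem n)).trans (hD n)
  have hlimL := le_limsup_of_tendsto_of_eventually_le hroot hle (isBoundedUnder_of ⟨_, hL⟩)
  have hlimD := le_limsup_of_tendsto_of_eventually_le (hroot.const_mul S)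
    (hle.mono fun n hn => (mul_le_mul_of_nonneg_left hn hS.le).trans (hSob _ (hmem n)))
    (isBoundedUnder_of ⟨_, hD⟩)
  exact ⟨hlimL, by linarith⟩

open Filter in
/-- if `{vₙ} ⊂ H¹_rad` is bounded, `vₙ ⇀ 0` in `H¹`, `H(vₙ) = 1` and
`C(vₙ) → 0`, then `limsup ‖vₙ‖_{2*}² ≥ (2p/C₀)^{1/p}` and
`½ limsup ‖∇vₙ‖₂² ≥ ½ S (2p/C₀)^{1/p}`. -/
theorem stmt_19 (N : ℕ) (hN : 3 ≤ N) (α : ℝ) (hα : α ∈ Set.Ioo (0:ℝ) N)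
    (p : ℝ) (hp : p = ((N:ℝ) + α) / ((N:ℝ) - 2))
    (q : ℝ) (hq : 2 < q) (hq' : q < 2 * (N:ℝ) / ((N:ℝ) - 2))
    (C₀ S : ℝ) (hC₀ : 0 < C₀) (hS : 0 < S)
    -- `C₀` is the sharp Hardy–Littlewood–Sobolev constant: `B(v) ≤ C₀‖v‖_{2*}^{2p}`
    (hHLS : ∀ v : EuclideanSpace ℝ (Fin N) → ℝ, MemH1 v →
      nonlocalB N α p v ≤ C₀ * l2starSq N v ^ p)
    -- `S` is the best Sobolev constant: `S‖v‖_{2*}² ≤ ‖∇v‖₂²`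
    (hSob : ∀ v : EuclideanSpace ℝ (Fin N) → ℝ, MemH1 v →
      S * l2starSq N v ≤ dirichlet v)
    (v : ℕ → EuclideanSpace ℝ (Fin N) → ℝ)
    (hmem : ∀ n, MemH1 (v n))
    -- radial symmetry
    (hrad : ∀ n, ∀ x y : EuclideanSpace ℝ (Fin N), ‖x‖ = ‖y‖ → v n x = v n y)
    -- boundedness in `H¹`
    (hbdd : ∃ M : ℝ, ∀ n, dirichlet (v n) + l2sq (v n) ≤ M)
    -- weak convergence `vₙ ⇀ 0` in `H¹`
    (hweak : ∀ φ : EuclideanSpace ℝ (Fin N) → ℝ, MemH1 φ →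
      Tendsto (fun n => ∫ x : EuclideanSpace ℝ (Fin N),
        (inner ℝ (gradient (v n) x) (gradient φ x) : ℝ) + v n x * φ x) atTop (nhds 0))
    (hconstr : ∀ n, constraintH N α p q (v n) = 1)
    (hCq : Tendsto (fun n => lqq q (v n)) atTop (nhds 0)) :
    (2 * p / C₀) ^ (1 / p) ≤ limsup (fun n => l2starSq N (v n)) atTop ∧
      (1 / 2) * S * (2 * p / C₀) ^ (1 / p) ≤
        (1 / 2) * limsup (fun n => dirichlet (v n)) atTop :=
  stmt_19_general N hN α hα p hp q C₀ S hC₀ hS hHLS hSob v hmem hbdd hconstr hCq
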